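/- Let (Z_k)_{k≥0} be a stationary Gaussian sequence with E[Z_0^2] < ∞, let λ > 0, let q be an even positive integer, and set R_{P,q}(λ, Z_k) := (Z_k − e^{−λk} Z_0)^q − Z_k^q. Then for every p ≥ 1 there exists a constant c(λ, q) depending on λ, q and E[Z_0^2] such that ‖(1/n) Σ_{k=0}^{n−1} R_{P,q}(λ, Z_k)‖_{L^p(Ω)} ≤ c(λ, q)/n for all n ≥ 1. -/

import Mathlib

/-!
By `|x ^ q - y ^ q| ≤ q |x - y| max (|x|, |y|) ^ (q - 1)`, the `k`-th summand is bounded pointwise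
by `e^{-λk}` times a fixed polynomial in `|Z_k|` and `|Z_0|`. Stationarity gives every `Z_k` the
Gaussian law of `Z_0`, so these polynomials have one common finite `L^p` norm, and Minkowski's
inequality sums the geometric weights `e^{-λk}` to a bound independent of `n`; the prefactor `1/n`
gives the rate.
-/

open MeasureTheory ProbabilityTheory Finset
open scoped ENNReal

theorem abs_sub_mul_pow_sub_pow_le (a b : ℝ) {t : ℝ} (ht0 : 0 ≤ t) (ht1 : t ≤ 1) (q : ℕ) :
    |(a - t * b) ^ q - a ^ q| ≤ t * (q * 2 ^ (q - 1) * (|a| ^ q + |b| ^ q)) := by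
  have hmax : max |a - t * b| |a| ≤ |a| + |b| := by
    refine max_le ?_ (le_add_of_nonneg_right (abs_nonneg b))
    calc |a - t * b| ≤ |a| + |t * b| := abs_sub _ _
      _ ≤ |a| + |b| := by
        rw [abs_mul, abs_of_nonneg ht0]
        gcongr
        exact mul_le_of_le_one_left (abs_nonneg b) ht1
  have hdrop : |b| * q * (|a| + |b|) ^ (q - 1) ≤ q * (|a| + |b|) ^ q := by
    rcases q with _ | q
    · simp
    · rw [Nat.add_sub_cancel, pow_succ]
      calc |b| * ↑(q + 1) * (|a| + |b|) ^ q = ↑(q + 1) * ((|a| + |b|) ^ q * |b|) := by ring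
        _ ≤ ↑(q + 1) * ((|a| + |b|) ^ q * (|a| + |b|)) := by
          gcongr
          exact le_add_of_nonneg_left (abs_nonneg a)
  calc |(a - t * b) ^ q - a ^ q|
      ≤ |(a - t * b) - a| * q * max |a - t * b| |a| ^ (q - 1) := abs_pow_sub_pow_le ..
    _ ≤ t * |b| * q * (|a| + |b|) ^ (q - 1) := by
        rw [sub_sub_cancel_left, abs_neg, abs_mul, abs_of_nonneg ht0]
        gcongr
    _ ≤ t * (q * (|a| + |b|) ^ q) := by
        rw [mul_assoc t, mul_assoc t]
        gcongr
    _ ≤ t * (q * 2 ^ (q - 1) * (|a| ^ q + |b| ^ q)) := by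
        rw [mul_assoc (q : ℝ)]
        gcongr
        exact add_pow_le (abs_nonneg a) (abs_nonneg b) q

section Lp

variable {α : Type*} [MeasurableSpace α] {μ : Measure α}

theorem eLpNorm_abs_pow (f : α → ℝ) (p : ℝ≥0∞) {q : ℕ} (hq : 0 < q) :
    eLpNorm (fun x => |f x| ^ q) p μ = eLpNorm f (p * q) μ ^ (q : ℝ) := by
  simpa only [Real.norm_eq_abs, Real.rpow_natCast, ENNReal.ofReal_natCast] using
    eLpNorm_norm_rpow (μ := μ) (p := p) f (Nat.cast_pos.mpr hq)

theorem eLpNorm_sub_mul_pow_sub_pow_le {f g : α → ℝ} (hf : AEStronglyMeasurable f μ)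
    (hg : AEStronglyMeasurable g μ) {t : ℝ} (ht0 : 0 ≤ t) (ht1 : t ≤ 1) {p : ℝ≥0∞} (hp : 1 ≤ p)
    {q : ℕ} (hq : 0 < q) :
    eLpNorm (fun x => (f x - t * g x) ^ q - f x ^ q) p μ ≤
      ENNReal.ofReal t * (ENNReal.ofReal (q * 2 ^ (q - 1)) *
        (eLpNorm f (p * q) μ ^ (q : ℝ) + eLpNorm g (p * q) μ ^ (q : ℝ))) := by
  calc eLpNorm (fun x => (f x - t * g x) ^ q - f x ^ q) p μ
      ≤ eLpNorm ((t * (q * 2 ^ (q - 1))) •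
          ((fun x => |f x| ^ q) + fun x => |g x| ^ q)) p μ := by
        refine eLpNorm_mono_real fun x => ?_
        simpa only [Real.norm_eq_abs, Pi.smul_apply, Pi.add_apply, smul_eq_mul, mul_assoc] using
          abs_sub_mul_pow_sub_pow_le (f x) (g x) ht0 ht1 q
    _ ≤ ENNReal.ofReal t * (ENNReal.ofReal (q * 2 ^ (q - 1)) *
          (eLpNorm f (p * q) μ ^ (q : ℝ) + eLpNorm g (p * q) μ ^ (q : ℝ))) := by
        rw [eLpNorm_const_smul, Real.enorm_of_nonneg (by positivity),
          ENNReal.ofReal_mul ht0, mul_assoc, ← eLpNorm_abs_pow f p hq, ← eLpNorm_abs_pow g p hq]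
        gcongr
        exact eLpNorm_add_le (by fun_prop) (by fun_prop) hp

theorem eLpNorm_sum_le_of_le_geometric {f : ℕ → α → ℝ} (hf : ∀ k, AEStronglyMeasurable (f k) μ)
    {p : ℝ≥0∞} (hp : 1 ≤ p) {r C : ℝ≥0∞} (hfC : ∀ k, eLpNorm (f k) p μ ≤ r ^ k * C) (n : ℕ) :
    eLpNorm (fun x => ∑ k ∈ range n, f k x) p μ ≤ (1 - r)⁻¹ * C := by
  rw [← Finset.sum_fn]
  calc eLpNorm (∑ k ∈ range n, f k) p μ ≤ ∑ k ∈ range n, eLpNorm (f k) p μ :=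
        eLpNorm_sum_le (fun k _ => hf k) hp
    _ ≤ ∑ k ∈ range n, r ^ k * C := sum_le_sum fun k _ => hfC k
    _ ≤ ∑' k, r ^ k * C := ENNReal.sum_le_tsum _
    _ = (1 - r)⁻¹ * C := by rw [ENNReal.tsum_mul_right, ENNReal.tsum_geometric]

theorem integral_abs_const_mul_rpow_rpow_inv_le {f : α → ℝ} (hf : AEStronglyMeasurable f μ)
    {p : ℝ} (hp : 0 < p) {C : ℝ≥0∞} (hC : C ≠ ∞) (hfC : eLpNorm f (ENNReal.ofReal p) μ ≤ C)
    (c : ℝ) : (∫ x, |c * f x| ^ p ∂μ) ^ (1 / p) ≤ |c| * C.toReal := by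
  have hcf : eLpNorm (c • f) (ENNReal.ofReal p) μ ≤ ENNReal.ofReal (|c| * C.toReal) := by
    rw [eLpNorm_const_smul, ENNReal.ofReal_mul (abs_nonneg c), ENNReal.ofReal_toReal hC,
      Real.enorm_eq_ofReal_abs]
    gcongr
  have hmem : MemLp (c • f) (ENNReal.ofReal p) μ := ⟨hf.const_smul c, hcf.trans_lt ENNReal.ofReal_lt_top⟩
  rw [hmem.eLpNorm_eq_integral_rpow_norm (by simpa using hp) ENNReal.ofReal_ne_top,
    ENNReal.toReal_ofReal hp.le, ENNReal.ofReal_le_ofReal_iff (by positivity)] at hcf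
  simpa only [Real.norm_eq_abs, one_div, Pi.smul_apply, smul_eq_mul] using hcf

end Lp

section Laws

variable {Ω : Type*} [MeasurableSpace Ω] {μ : Measure Ω}

theorem memLp_of_map_eq_gaussianReal {X : Ω → ℝ} (hX : AEMeasurable X μ) {m : ℝ} {v : NNReal}
    (hlaw : μ.map X = gaussianReal m v) {p : ℝ≥0∞} (hp : p ≠ ∞) : MemLp X p μ := by
  have h : MemLp id p (μ.map X) := hlaw ▸ memLp_id_gaussianReal' p hp
  exact (memLp_map_measure_iff aestronglyMeasurable_id hX).mp h

theorem identDistrib_of_map_shift_eq {β : Type*} [MeasurableSpace β] {Z : ℕ → Ω → β}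
    (hZ : ∀ k, Measurable (Z k))
    (hshift : ∀ m, μ.map (fun ω i => Z (i + m) ω) = μ.map (fun ω i => Z i ω)) (k : ℕ) :
    IdentDistrib (Z k) (Z 0) μ μ where
  aemeasurable_fst := (hZ k).aemeasurable
  aemeasurable_snd := (hZ 0).aemeasurable
  map_eq := by
    have h := congrArg (Measure.map fun z : ℕ → β => z 0) (hshift k)
    rw [Measure.map_map (measurable_pi_apply 0) (measurable_pi_lambda _ fun i => hZ (i + k)),
      Measure.map_map (measurable_pi_apply 0) (measurable_pi_lambda _ hZ)] at h
    simpa [Function.comp_def] using h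

end Laws

theorem Lp_rate_power_remainder_sum_general
    {Ω : Type*} [MeasureSpace Ω]
    (Z : ℕ → Ω → ℝ) (hmeas : ∀ k, Measurable (Z k))
    (hGauss : ∀ (s : Finset ℕ) (c : ℕ → ℝ), ∃ v : NNReal,
      Measure.map (fun ω => ∑ i ∈ s, c i * Z i ω) ℙ = gaussianReal 0 v)
    (hStat : ∀ m : ℕ, Measure.map (fun ω (i : ℕ) => Z (i + m) ω) ℙ
      = Measure.map (fun ω (i : ℕ) => Z i ω) ℙ)
    (lam : ℝ) (hlam : 0 < lam) (q : ℕ) (hq0 : 0 < q) :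
    ∀ p : ℝ, 1 ≤ p → ∃ c : ℝ, 0 < c ∧ ∀ n : ℕ, 1 ≤ n →
      (∫ ω, |(1 / (n : ℝ)) * ∑ k ∈ Finset.range n,
          ((Z k ω - Real.exp (-lam * k) * Z 0 ω) ^ q - (Z k ω) ^ q)| ^ p ∂ℙ) ^ (1 / p)
      ≤ c / n := by
  intro p hp
  set P := ENNReal.ofReal p
  have hP : 1 ≤ P := ENNReal.one_le_ofReal.mpr hp
  obtain ⟨v, hv⟩ := hGauss {0} fun _ => 1
  have hZ0 : MemLp (Z 0) (P * q) ℙ :=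
    memLp_of_map_eq_gaussianReal (hmeas 0).aemeasurable (by simpa using hv) (by finiteness)
  set C := ENNReal.ofReal (q * 2 ^ (q - 1)) *
    (eLpNorm (Z 0) (P * q) ℙ ^ (q : ℝ) + eLpNorm (Z 0) (P * q) ℙ ^ (q : ℝ))
  set r := ENNReal.ofReal (Real.exp (-lam))
  have hterm : ∀ k : ℕ, eLpNorm (fun ω => (Z k ω - Real.exp (-lam * k) * Z 0 ω) ^ q - Z k ω ^ q)
      P ℙ ≤ r ^ k * C := fun k => by
    have hexp : ENNReal.ofReal (Real.exp (-lam * k)) = r ^ k := by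
      rw [mul_comm, Real.exp_nat_mul, ENNReal.ofReal_pow (Real.exp_pos _).le]
    have h := eLpNorm_sub_mul_pow_sub_pow_le (μ := ℙ) (hmeas k).aestronglyMeasurable
      (hmeas 0).aestronglyMeasurable (Real.exp_pos (-lam * k)).le
      (Real.exp_le_one_iff.mpr (mul_nonpos_of_nonpos_of_nonneg (neg_nonpos.mpr hlam.le)
        k.cast_nonneg)) hP hq0
    rwa [(identDistrib_of_map_shift_eq hmeas hStat k).eLpNorm_eq, hexp] at h
  have hC : (1 - r)⁻¹ * C ≠ ∞ := by
    have hr : r < 1 := ENNReal.ofReal_lt_one.mpr (Real.exp_lt_one_iff.mpr (neg_neg_of_pos hlam))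
    have := hZ0.eLpNorm_ne_top
    refine ENNReal.mul_ne_top (ENNReal.inv_ne_top.mpr (tsub_pos_of_lt hr).ne') ?_
    finiteness
  refine ⟨((1 - r)⁻¹ * C).toReal + 1, by positivity, fun n _ => ?_⟩
  calc _ ≤ |1 / (n : ℝ)| * ((1 - r)⁻¹ * C).toReal :=
        integral_abs_const_mul_rpow_rpow_inv_le (by fun_prop) (zero_lt_one.trans_le hp) hC
          (eLpNorm_sum_le_of_le_geometric (fun k => by fun_prop) hP hterm n) _
    _ ≤ (((1 - r)⁻¹ * C).toReal + 1) / n := by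
        rw [abs_of_nonneg (by positivity), one_div_mul_eq_div]
        gcongr
        linarith

theorem Lp_rate_power_remainder_sum
    {Ω : Type*} [MeasureSpace Ω] [IsProbabilityMeasure (ℙ : Measure Ω)]
    (Z : ℕ → Ω → ℝ) (hmeas : ∀ k, Measurable (Z k))
    (hGauss : ∀ (s : Finset ℕ) (c : ℕ → ℝ), ∃ v : NNReal,
      Measure.map (fun ω => ∑ i ∈ s, c i * Z i ω) ℙ = gaussianReal 0 v)
    (hStat : ∀ m : ℕ, Measure.map (fun ω (i : ℕ) => Z (i + m) ω) ℙ
      = Measure.map (fun ω (i : ℕ) => Z i ω) ℙ)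
    (hL2 : Integrable (fun ω => (Z 0 ω) ^ 2) ℙ)
    (lam : ℝ) (hlam : 0 < lam) (q : ℕ) (hq : Even q) (hq0 : 0 < q) :
    ∀ p : ℝ, 1 ≤ p → ∃ c : ℝ, 0 < c ∧ ∀ n : ℕ, 1 ≤ n →
      (∫ ω, |(1 / (n : ℝ)) * ∑ k ∈ Finset.range n,
          ((Z k ω - Real.exp (-lam * k) * Z 0 ω) ^ q - (Z k ω) ^ q)| ^ p ∂ℙ) ^ (1 / p)
      ≤ c / n :=
  Lp_rate_power_remainder_sum_general Z hmeas hGauss hStat lam hlam q hq0
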